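/- arXiv:2206.06557 — 3 statements merged into one kernel-verified Lean document; each statement's English description precedes it below -/
import Mathlib

section
/- Let C_A and C_B be classical codes in 𝔽₂ⁿ each of minimum distance at least d, and let C = C_A ⊗ 𝔽₂ⁿ + 𝔽₂ⁿ ⊗ C_A be their dual tensor code. Suppose X ∈ C is supported on the union of α nonzero rows and β nonzero columns, with α, β < d. Then X can be written as X = r + c where r ∈ 𝔽₂ⁿ ⊗ C_B is supported on at most α nonzero rows and c ∈ C_A ⊗ 𝔽₂ⁿ is supported on at most β nonzero columns. -/
def hw {n : ℕ} (x : Fin n → ZMod 2) : ℕ :=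
  (Finset.univ.filter fun i => x i ≠ 0).card

def colCode {m n : ℕ} (C : Submodule (ZMod 2) (Fin m → ZMod 2)) :
    Submodule (ZMod 2) (Matrix (Fin m) (Fin n) (ZMod 2)) where
  carrier := {X | ∀ j, (fun i => X i j) ∈ C}
  add_mem' := by
    intro X Y hX hY j
    have h : (fun i => (X + Y) i j) = (fun i => X i j) + (fun i => Y i j) := by
      funext i; simp [Matrix.add_apply]
    rw [h]; exact C.add_mem (hX j) (hY j)
  zero_mem' := by
    intro j
    have h : (fun i => (0 : Matrix (Fin m) (Fin n) (ZMod 2)) i j) = (0 : Fin m → ZMod 2) := by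
      funext i; simp
    rw [h]; exact C.zero_mem
  smul_mem' := by
    intro c X hX j
    have h : (fun i => (c • X) i j) = c • (fun i => X i j) := by
      funext i; simp [Matrix.smul_apply]
    rw [h]; exact C.smul_mem c (hX j)

def rowCode {m n : ℕ} (C : Submodule (ZMod 2) (Fin n → ZMod 2)) :
    Submodule (ZMod 2) (Matrix (Fin m) (Fin n) (ZMod 2)) where
  carrier := {X | ∀ i, (fun j => X i j) ∈ C}
  add_mem' := by
    intro X Y hX hY i
    have h : (fun j => (X + Y) i j) = (fun j => X i j) + (fun j => Y i j) := by
      funext j; simp [Matrix.add_apply]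
    rw [h]; exact C.add_mem (hX i) (hY i)
  zero_mem' := by
    intro i
    have h : (fun j => (0 : Matrix (Fin m) (Fin n) (ZMod 2)) i j) = (0 : Fin n → ZMod 2) := by
      funext j; simp
    rw [h]; exact C.zero_mem
  smul_mem' := by
    intro c X hX i
    have h : (fun j => (c • X) i j) = c • (fun j => X i j) := by
      funext j; simp [Matrix.smul_apply]
    rw [h]; exact C.smul_mem c (hX i)

/-!
Write `X = A + B` with `A ∈ C_A ⊗ 𝔽₂ⁿ` and `B ∈ 𝔽₂ⁿ ⊗ C_B`. Since `|Sr| < d`, a word of `C_A` is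
determined by its entries outside `Sr`, and this erasure decoding is a linear map `T` into `C_A`.
Applying `T` to every column of `-B` gives a matrix `M` whose columns lie in `C_A` and whose rows,
being combinations of rows of `B`, lie in `C_B`. Outside `Sc` the columns of `X` vanish off `Sr`, so
there `-B` and `A` agree off `Sr` and `M` reproduces the columns of `A`. Hence `c = A - M` vanishes
outside `Sc`, and each row of `r = B + M` outside `Sr` is a word of `C_B` supported on `Sc`, so zero.
-/

theorem eq_zero_of_hw_lt {n d : ℕ} {C : Submodule (ZMod 2) (Fin n → ZMod 2)}
    (hd : ∀ x ∈ C, x ≠ 0 → d ≤ hw x) {S : Finset (Fin n)} (hS : S.card < d)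
    {x : Fin n → ZMod 2} (hx : x ∈ C) (hxS : ∀ k ∉ S, x k = 0) : x = 0 := by
  by_contra hne
  have hsupp : Finset.univ.filter (fun k => x k ≠ 0) ⊆ S := fun k hk => by
    by_contra hkS
    exact (Finset.mem_filter.mp hk).2 (hxS k hkS)
  exact absurd ((hd x hx hne).trans (Finset.card_le_card hsupp)) (not_le.mpr hS)

theorem exists_erasure_decoder {K ι : Type*} [Field K] (C : Submodule K (ι → K)) (S : Set ι)
    (hC : ∀ x ∈ C, (∀ k ∉ S, x k = 0) → x = 0) :
    ∃ T : (ι → K) →ₗ[K] (ι → K),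
      (∀ y, T y ∈ C) ∧ ∀ x ∈ C, ∀ y, (∀ k ∉ S, y k = x k) → T y = x := by
  set ρ : (ι → K) →ₗ[K] (↥Sᶜ → K) := LinearMap.funLeft K K Subtype.val
  have hker : (ρ ∘ₗ C.subtype).ker = ⊥ := by
    refine LinearMap.ker_eq_bot'.mpr fun x hx => Subtype.ext (hC x x.2 fun k hk => ?_)
    exact congrFun hx ⟨k, hk⟩
  obtain ⟨g, hg⟩ := LinearMap.exists_leftInverse_of_injective _ hker
  refine ⟨C.subtype ∘ₗ g ∘ₗ ρ, fun y => (g (ρ y)).2, fun x hx y hxy => ?_⟩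
  have hρ : ρ y = (ρ ∘ₗ C.subtype) ⟨x, hx⟩ := funext fun k => hxy k k.2
  rw [LinearMap.comp_apply, LinearMap.comp_apply, hρ, ← LinearMap.comp_apply g, hg]
  rfl

theorem LinearMap.toMatrix'_mul_col {R m n p : Type*} [CommSemiring R] [Fintype n]
    [DecidableEq n] (f : (n → R) →ₗ[R] (m → R)) (B : Matrix n p R) (j : p) :
    (fun i => (LinearMap.toMatrix' f * B) i j) = f (fun i => B i j) := by
  rw [← LinearMap.toMatrix'_mulVec]
  rfl

theorem mul_mem_rowCode {m k n : ℕ} {C : Submodule (ZMod 2) (Fin n → ZMod 2)}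
    (P : Matrix (Fin m) (Fin k) (ZMod 2)) {B : Matrix (Fin k) (Fin n) (ZMod 2)}
    (hB : B ∈ rowCode C) : P * B ∈ rowCode C := fun i => by
  have hrow : (fun j => (P * B) i j) = ∑ l, P i l • fun j => B l j := by
    ext j
    simp [Matrix.mul_apply, Finset.sum_apply]
  rw [hrow]
  exact C.sum_mem fun l _ => C.smul_mem _ (hB l)

/-- Row-column decomposition: a dual tensor codeword supported on fewer than `d`
nonzero rows and columns decomposes as `r + c` respecting the supports. -/
theorem rowcol_decomposition (n d : ℕ)
    (CA CB : Submodule (ZMod 2) (Fin n → ZMod 2))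
    (hdA : ∀ x ∈ CA, x ≠ 0 → d ≤ hw x)
    (hdB : ∀ x ∈ CB, x ≠ 0 → d ≤ hw x)
    (X : Matrix (Fin n) (Fin n) (ZMod 2))
    (hX : X ∈ colCode CA ⊔ rowCode CB)
    (α β : ℕ) (hα : α < d) (hβ : β < d)
    (Sr Sc : Finset (Fin n)) (hSr : Sr.card = α) (hSc : Sc.card = β)
    (hsupp : ∀ i j, i ∉ Sr → j ∉ Sc → X i j = 0) :
    ∃ r c : Matrix (Fin n) (Fin n) (ZMod 2),
      r ∈ rowCode CB ∧ c ∈ colCode CA ∧ X = r + c ∧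
      (∀ i, i ∉ Sr → ∀ j, r i j = 0) ∧
      (∀ j, j ∉ Sc → ∀ i, c i j = 0) := by
  obtain ⟨A, hA, B, hB, rfl⟩ := Submodule.mem_sup.mp hX
  obtain ⟨T, hTC, hT⟩ := exists_erasure_decoder CA (Sr : Set (Fin n))
    fun x hx hxS => eq_zero_of_hw_lt hdA (hSr ▸ hα) hx hxS
  set M := LinearMap.toMatrix' T * -B
  have hMA : ∀ j ∉ Sc, ∀ i, M i j = A i j := fun j hj i => by
    refine congrFun ((T.toMatrix'_mul_col _ j).trans (hT _ (hA j) _ fun k hk => ?_)) i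
    exact neg_eq_of_add_eq_zero_left (hsupp k j hk hj)
  have hr : B + M ∈ rowCode CB := add_mem hB (mul_mem_rowCode _ (neg_mem hB))
  refine ⟨B + M, A - M, hr, ?_, by abel, fun i hi j => ?_, fun j hj i => ?_⟩
  · exact sub_mem hA fun j => T.toMatrix'_mul_col (-B) j ▸ hTC _
  · refine congrFun (eq_zero_of_hw_lt hdB (hSc ▸ hβ) (hr i) fun j hj => ?_) j
    simpa [hMA j hj, add_comm] using hsupp i j hi hj
  · simp [hMA j hj i]
end

section
/- Let Y ∈ 𝔽₂^{Δ×Δ'} be a fixed matrix of rank M, and let H ∈ 𝔽₂^{m×Δ} be a uniformly random binary matrix. Then for any integer K ≥ 0, the probability that rank(HY) = K is at most C(M,K) · 2^{-(m-K)(M-K)}. -/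
open Finset Matrix Submodule

/-!
Let `B` be a matrix of full column rank `M` with the same column space as `Y`. Then
`rank (H * Y) = rank (H * B)`, and since `B` has a left inverse, `H ↦ H * B` is a surjective
additive map, so `H * B` is uniformly distributed on `𝔽₂^{m×M}`. It remains to count the `m × M`
matrices of rank `K` over a field with `q` elements: such a matrix has `K` columns spanning its
column space, and it is determined by these columns (`q^{mK}` choices) and the coefficients
expressing the other `M - K` columns in terms of them (`q^{K(M-K)}` choices). Since
`mK + K(M-K) = mM - (m-K)(M-K)`, there are at most `C(M,K) q^{mM - (m-K)(M-K)}` of them.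
-/

section Fibers

variable {G G' : Type*} [AddGroup G] [Finite G] [AddGroup G']

theorem AddMonoidHom.natCard_subtype_comp_of_surjective (f : G →+ G')
    (hf : Function.Surjective f) (p : G' → Prop) :
    Nat.card {x // p (f x)} = Nat.card {y // p y} * Nat.card {x // f x = 0} := by
  classical
  have := Fintype.ofFinite G
  have : Fintype G' := Fintype.ofSurjective f hf
  simp only [Nat.card_eq_fintype_card, Fintype.card_subtype]
  rw [card_eq_sum_card_fiberwise (f := f) (t := {y | p y}) (fun x hx => by simpa using hx),
    ← smul_eq_mul, ← sum_const]
  refine sum_congr rfl fun y hy => ?_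
  rw [filter_filter, filter_congr fun x _ => and_iff_right_of_imp fun h => h ▸ (mem_filter.1 hy).2]
  exact AddMonoidHom.card_fiber_eq_of_mem_range f (hf y) ⟨0, map_zero f⟩

theorem AddMonoidHom.natCard_subtype_comp_div_of_surjective (f : G →+ G')
    (hf : Function.Surjective f) (p : G' → Prop) :
    (Nat.card {x // p (f x)} : ℝ) / Nat.card G = Nat.card {y // p y} / Nat.card G' := by
  have hcard := f.natCard_subtype_comp_of_surjective hf fun _ => True
  have hker : (Nat.card {x // f x = 0} : ℝ) ≠ 0 := by
    have : Nonempty {x // f x = 0} := ⟨⟨0, map_zero f⟩⟩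
    exact_mod_cast Nat.card_pos.ne'
  rw [Nat.card_subtype_true, Nat.card_subtype_true] at hcard
  rw [f.natCard_subtype_comp_of_surjective hf p, hcard]
  push_cast
  exact mul_div_mul_right _ _ hker

end Fibers

theorem Matrix.rank_mul_eq_of_range_mulVecLin_eq {R l m n n' : Type*} [CommRing R] [Fintype m]
    [Fintype n] [Fintype n'] (A : Matrix l m R) {B : Matrix m n R} {C : Matrix m n' R}
    (h : LinearMap.range B.mulVecLin = LinearMap.range C.mulVecLin) :
    (A * B).rank = (A * C).rank := by
  rw [Matrix.rank, Matrix.rank, Matrix.mulVecLin_mul, Matrix.mulVecLin_mul, LinearMap.range_comp,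
    LinearMap.range_comp, h]

theorem Matrix.exists_mul_eq_one_and_range_mulVecLin_eq {F m n : Type*} [Field F] [Fintype m]
    [DecidableEq m] [Fintype n] (Y : Matrix m n F) :
    ∃ (B : Matrix m (Fin Y.rank) F) (L : Matrix (Fin Y.rank) m F), L * B = 1 ∧
      LinearMap.range B.mulVecLin = LinearMap.range Y.mulVecLin := by
  set W := LinearMap.range Y.mulVecLin
  let β : Module.Basis (Fin Y.rank) F W := Module.finBasisOfFinrankEq F W rfl
  let g := W.subtype ∘ₗ β.equivFun.symm.toLinearMap
  obtain ⟨L, hL⟩ := g.exists_leftInverse_of_injective <|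
    LinearMap.ker_eq_bot.2 (W.injective_subtype.comp β.equivFun.symm.injective)
  refine ⟨LinearMap.toMatrix' g, LinearMap.toMatrix' L, ?_, ?_⟩
  · rw [← LinearMap.toMatrix'_comp, hL, LinearMap.toMatrix'_id]
  · rw [← Matrix.toLin'_apply', Matrix.toLin'_toMatrix', LinearMap.range_comp,
      LinearEquiv.range, Submodule.map_top, Submodule.range_subtype]

theorem Matrix.natCard_eq_pow (m n α : Type*) [Fintype m] [Fintype n] [Fintype α] :
    Nat.card (Matrix m n α) = Fintype.card α ^ (Fintype.card m * Fintype.card n) := by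
  simp only [Matrix, Nat.card_fun, Nat.card_eq_fintype_card, ← pow_mul, mul_comm]

section Counting

variable {F : Type*} [Field F] {m n : Type*} [Fintype n]

theorem Matrix.exists_card_eq_rank_forall_col_mem_span (A : Matrix m n F) :
    ∃ S : Finset n, #S = A.rank ∧ ∀ j, A.col j ∈ span F (A.col '' S) := by
  obtain ⟨κ, a, ha, hspan, hli⟩ := exists_linearIndependent' F A.col
  have := Fintype.ofInjective a ha
  have hS : A.col '' ↑(univ.map ⟨a, ha⟩) = Set.range (A.col ∘ a) := by
    rw [coe_map, coe_univ, Set.image_univ, ← Set.range_comp]; rfl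
  refine ⟨univ.map ⟨a, ha⟩, ?_, fun j => ?_⟩
  · rw [card_map, card_univ, rank_eq_finrank_span_cols, ← hspan, finrank_span_eq_card hli]
  · rw [hS, hspan]
    exact subset_span ⟨j, rfl⟩

theorem Matrix.natCard_forall_col_mem_span_le [Fintype F] [Fintype m] (S : Finset n) :
    Nat.card {A : Matrix m n F // ∀ j, A.col j ∈ span F (A.col '' S)} ≤
      Fintype.card F ^ (Fintype.card m * #S + #S * (Fintype.card n - #S)) := by
  classical
  let Ψ : Matrix m S F × Matrix S {j // j ∉ S} F → Matrix m n F := fun XE =>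
    of fun d j => if h : j ∈ S then XE.1 d ⟨j, h⟩ else (XE.1 * XE.2) d ⟨j, h⟩
  have hΨ : {A : Matrix m n F | ∀ j, A.col j ∈ span F (A.col '' S)} ⊆ Set.range Ψ := by
    intro A hA
    simp only [mem_span_image_finset_iff_exists_fun] at hA
    choose c hc using hA
    refine ⟨(A.submatrix id Subtype.val, of fun i j => c j i), ?_⟩
    ext d j
    by_cases h : j ∈ S
    · simp [Ψ, h]
    · simpa [Ψ, h, Matrix.mul_apply, mul_comm] using congrFun (hc j) d
  calc _ ≤ Nat.card (Set.range Ψ) := Nat.card_mono (Set.toFinite _) hΨ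
    _ ≤ Nat.card (Matrix m S F × Matrix S {j // j ∉ S} F) := Finite.card_range_le Ψ
    _ = _ := by
      rw [Nat.card_prod, Matrix.natCard_eq_pow, Matrix.natCard_eq_pow, ← pow_add,
        Fintype.card_subtype_compl, Fintype.card_coe]

theorem Matrix.natCard_rank_eq_le [Fintype F] [Fintype m] (K : ℕ) :
    Nat.card {A : Matrix m n F // A.rank = K} ≤
      (Fintype.card n).choose K *
        Fintype.card F ^ (Fintype.card m * K + K * (Fintype.card n - K)) := by
  classical
  have hcover : ({A | A.rank = K} : Finset (Matrix m n F)) ⊆ (powersetCard K univ).biUnion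
      fun S : Finset n => {A | ∀ j, A.col j ∈ span F (A.col '' S)} := by
    intro A hA
    obtain ⟨S, hS, hspan⟩ := A.exists_card_eq_rank_forall_col_mem_span
    refine mem_biUnion.2 ⟨S, mem_powersetCard.2 ⟨subset_univ S, hS.trans (mem_filter.1 hA).2⟩, ?_⟩
    exact mem_filter.2 ⟨mem_univ A, hspan⟩
  have hpiece : ∀ S ∈ powersetCard K (univ : Finset n),
      #{A : Matrix m n F | ∀ j, A.col j ∈ span F (A.col '' S)} ≤
        Fintype.card F ^ (Fintype.card m * K + K * (Fintype.card n - K)) := by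
    intro S hS
    have := natCard_forall_col_mem_span_le (F := F) (m := m) S
    rwa [Nat.card_eq_fintype_card, Fintype.card_subtype, (mem_powersetCard.1 hS).2] at this
  rw [Nat.card_eq_fintype_card, Fintype.card_subtype]
  calc _ ≤ _ := card_le_card hcover
    _ ≤ _ := card_biUnion_le_card_mul _ _ _ hpiece
    _ = _ := by rw [card_powersetCard, card_univ]

theorem Matrix.natCard_rank_eq_div_le [Fintype F] [Fintype m] (K : ℕ) :
    (Nat.card {A : Matrix m n F // A.rank = K} : ℝ) / Nat.card (Matrix m n F) ≤
      (Fintype.card n).choose K *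
        (Fintype.card F : ℝ) ^ (-(((Fintype.card m : ℤ) - K) * ((Fintype.card n : ℤ) - K))) := by
  by_cases hK : K ≤ Fintype.card m ∧ K ≤ Fintype.card n
  · have hexp : ((Fintype.card m * K + K * (Fintype.card n - K) : ℕ) : ℤ) =
        -(((Fintype.card m : ℤ) - K) * ((Fintype.card n : ℤ) - K)) +
          (Fintype.card m * Fintype.card n : ℕ) := by
      push_cast [Nat.cast_sub hK.2]
      ring
    have hq : (0 : ℝ) < Fintype.card F := by exact_mod_cast Fintype.card_pos
    rw [div_le_iff₀ (by rw [natCard_eq_pow]; positivity), natCard_eq_pow, Nat.cast_pow,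
      ← zpow_natCast, mul_assoc, ← zpow_add₀ hq.ne', ← hexp, zpow_natCast]
    exact_mod_cast natCard_rank_eq_le K
  · have : IsEmpty {A : Matrix m n F // A.rank = K} :=
      ⟨fun A => hK ⟨A.2 ▸ A.1.rank_le_card_height, A.2 ▸ A.1.rank_le_card_width⟩⟩
    rw [Nat.card_of_isEmpty, Nat.cast_zero, zero_div]
    positivity

end Counting

/-- For fixed `Y` of rank `M` and uniformly random `H ∈ 𝔽₂^{m×Δ}`,
`Pr(rank(HY) = K) ≤ C(M,K)·2^{-(m-K)(M-K)}`. -/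
theorem prob_rank_mul (Δ Δ' m : ℕ) (Y : Matrix (Fin Δ) (Fin Δ') (ZMod 2))
    (M K : ℕ) (hY : Y.rank = M) :
    (Nat.card {H : Matrix (Fin m) (Fin Δ) (ZMod 2) // (H * Y).rank = K} : ℝ) /
      (Nat.card (Matrix (Fin m) (Fin Δ) (ZMod 2)) : ℝ) ≤
      (M.choose K : ℝ) * (2 : ℝ) ^ (-(((m : ℤ) - K) * ((M : ℤ) - K))) := by
  subst hY
  obtain ⟨B, L, hLB, hrange⟩ := Y.exists_mul_eq_one_and_range_mulVecLin_eq
  let f : Matrix (Fin m) (Fin Δ) (ZMod 2) →+ Matrix (Fin m) (Fin Y.rank) (ZMod 2) :=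
    AddMonoidHom.mk' (· * B) fun _ _ => Matrix.add_mul _ _ _
  have hf : Function.Surjective f := fun A => ⟨A * L, by simp [f, Matrix.mul_assoc, hLB]⟩
  have hrank (H : Matrix (Fin m) (Fin Δ) (ZMod 2)) : (H * Y).rank = (f H).rank :=
    (H.rank_mul_eq_of_range_mulVecLin_eq hrange).symm
  simp only [hrank]
  rw [f.natCard_subtype_comp_div_of_surjective hf (·.rank = K)]
  simpa using Matrix.natCard_rank_eq_div_le (F := ZMod 2) (m := Fin m) (n := Fin Y.rank) K
end

section
/- Generic iterative decoding lemma: Let 𝒞 be an [[n,k,d]] CSS code with classical codes 𝒞_X, 𝒞_Z ⊆ 𝔽₂ⁿ, and let U : 𝔽₂ⁿ → ℤ_{≥0} be a potential function that is constant on cosets of 𝒞_X, satisfies U(e)=0 iff e ∈ 𝒞_X, and U(e) ≤ s|e| for all e. Suppose an iterative decoder, given the syndrome of any nonzero Z error of weight less than αd (α<1), can strictly decrease U by flipping a set of at most c bits. Then starting from any error e with |e| < αd/(1+sc), repeated application terminates with a total accumulated error e_J such that e_J ∈ 𝒞_Z^⊥, i.e., the decoder corrects e up to stabilizer. -/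
def dualCode {n : ℕ} (C : Submodule (ZMod 2) (Fin n → ZMod 2)) :
    Submodule (ZMod 2) (Fin n → ZMod 2) where
  carrier := {y | ∀ x ∈ C, ∑ i, x i * y i = 0}
  add_mem' := by
    intro a b ha hb x hx
    have h1 := ha x hx
    have h2 := hb x hx
    calc ∑ i, x i * (a + b) i = ∑ i, (x i * a i + x i * b i) := by
          apply Finset.sum_congr rfl; intro i _; simp [mul_add]
      _ = (∑ i, x i * a i) + ∑ i, x i * b i := Finset.sum_add_distrib
      _ = 0 := by rw [h1, h2]; ring
  zero_mem' := by intro x hx; simp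
  smul_mem' := by
    intro c a ha x hx
    have h1 := ha x hx
    calc ∑ i, x i * (c • a) i = c * ∑ i, x i * a i := by
          rw [Finset.mul_sum]; apply Finset.sum_congr rfl; intro i _
          simp only [Pi.smul_apply, smul_eq_mul]; ring
      _ = 0 := by rw [h1]; ring

/-!
Along a decoding step `e ↦ e + z` with `|z| ≤ c` and `U(e + z) ≤ U(e) - 1`, the quantity
`|e| + c U(e)` cannot increase. Initially it is at most `(1 + sc)|e| < αd`, so every error met
along the way has weight `< αd` and the decoder can keep going until `U = 0`. The final error
then lies in `𝒞_X` and has weight `< αd < d`, hence lies in `𝒞_Z^⊥`.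
-/

theorem Relation.ReflTransGen.exists_seq {α : Type*} {r : α → α → Prop} {a b : α}
    (h : Relation.ReflTransGen r a b) :
    ∃ (J : ℕ) (f : ℕ → α), f 0 = a ∧ (∀ i < J, r (f i) (f (i + 1))) ∧ f J = b := by
  induction h using Relation.ReflTransGen.head_induction_on with
  | refl => exact ⟨0, fun _ => b, rfl, fun i hi => absurd hi i.not_lt_zero, rfl⟩
  | @head x y hxy _ ih =>
    obtain ⟨J, f, hf0, hf, hfJ⟩ := ih
    refine ⟨J + 1, fun i => Nat.casesOn i x f, rfl, ?_, hfJ⟩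
    rintro (_ | i) hi
    · simpa [hf0] using hxy
    · exact hf i (by omega)

lemma hw_add_le {n : ℕ} (a b : Fin n → ZMod 2) : hw (a + b) ≤ hw a + hw b := by
  refine (Finset.card_le_card fun i hi => ?_).trans (Finset.card_union_le _ _)
  simp only [Finset.mem_filter, Finset.mem_union, Finset.mem_univ, true_and] at hi ⊢
  by_contra! h
  simp [h.1, h.2] at hi

section Descent

variable {V : Type*} [AddCommGroup V] (w : V → ℕ) (c : ℕ) (U : V → ℕ)

def DecodingStep (e e' : V) : Prop :=
  w (e' - e) ≤ c ∧ U e' < U e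

variable {w c U}

lemma weight_add_potential_le_of_decodingStep (hw_add : ∀ a b, w (a + b) ≤ w a + w b)
    {e e' : V} (h : DecodingStep w c U e e') : w e' + c * U e' ≤ w e + c * U e := by
  obtain ⟨hz, hU⟩ := h
  have hweight : w e' ≤ w e + c := by
    have := hw_add e (e' - e)
    rw [add_sub_cancel] at this
    omega
  have hpot : c * (U e' + 1) ≤ c * U e := Nat.mul_le_mul_left c hU
  linarith [Nat.mul_succ c (U e')]

theorem exists_reflTransGen_decodingStep_potential_eq_zero
    (hw_add : ∀ a b, w (a + b) ≤ w a + w b) {B : ℝ}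
    (hstep : ∀ e, U e ≠ 0 → (w e : ℝ) < B → ∃ z, w z ≤ c ∧ U (e + z) < U e)
    (e : V) (he : ((w e + c * U e : ℕ) : ℝ) < B) :
    ∃ e', Relation.ReflTransGen (DecodingStep w c U) e e' ∧ U e' = 0 ∧
      w e' ≤ w e + c * U e := by
  induction hUe : U e using Nat.strong_induction_on generalizing e with
  | _ m ih =>
    subst hUe
    by_cases hU : U e = 0
    · exact ⟨e, .refl, hU, Nat.le_add_right _ _⟩
    obtain ⟨z, hz, hUz⟩ :=
      hstep e hU (lt_of_le_of_lt (by exact_mod_cast Nat.le_add_right _ _) he)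
    have hdec : DecodingStep w c U e (e + z) := ⟨by rwa [add_sub_cancel_left], hUz⟩
    have hmono := weight_add_potential_le_of_decodingStep hw_add hdec
    obtain ⟨e', hpath, hU', hw'⟩ :=
      ih _ hUz (e + z) (lt_of_le_of_lt (by exact_mod_cast hmono) he) rfl
    exact ⟨e', .head hdec hpath, hU', hw'.trans hmono⟩

end Descent

theorem iterative_decoder_correctness_general (n d : ℕ) (α s : ℝ) (c : ℕ)
    (CX CZ : Submodule (ZMod 2) (Fin n → ZMod 2))
    (hα : α < 1) (hs : 0 < s)
    (U : (Fin n → ZMod 2) → ℕ)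
    (hU0 : ∀ e, U e = 0 ↔ e ∈ CX)
    (hUs : ∀ e, (U e : ℝ) ≤ s * hw e)
    (hd : ∀ x ∈ CX, (hw x : ℝ) < d → x ∈ dualCode CZ)
    (hstep : ∀ e, e ∉ CX → (hw e : ℝ) < α * d →
      ∃ z, hw z ≤ c ∧ U (e + z) < U e)
    (e : Fin n → ZMod 2) (he : (hw e : ℝ) < α * d / (1 + s * c)) :
    ∃ (J : ℕ) (seq : ℕ → (Fin n → ZMod 2)),
      seq 0 = e ∧
      (∀ i < J, hw (seq (i + 1) - seq i) ≤ c ∧ U (seq (i + 1)) < U (seq i)) ∧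
      seq J ∈ dualCode CZ := by
  have hsc : 0 < 1 + s * c := by positivity
  have hαd : α * d < d := by
    have hαd_pos : 0 < α * d :=
      (div_pos_iff_of_pos_right hsc).mp ((Nat.cast_nonneg _).trans_lt he)
    have hd_pos : (0 : ℝ) < d :=
      Nat.cast_pos.mpr (Nat.pos_of_ne_zero fun h => by simp [h] at hαd_pos)
    exact mul_lt_of_lt_one_left hd_pos hα
  have hbound : ((hw e + c * U e : ℕ) : ℝ) < α * d :=
    calc ((hw e + c * U e : ℕ) : ℝ) = hw e + c * U e := by push_cast; rfl
      _ ≤ hw e + c * (s * hw e) := by gcongr; exact hUs e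
      _ = hw e * (1 + s * c) := by ring
      _ < α * d := (lt_div_iff₀ hsc).mp he
  obtain ⟨e', hpath, hU', hw'⟩ := exists_reflTransGen_decodingStep_potential_eq_zero
    hw_add_le (fun e hU => hstep e (mt (hU0 e).mpr hU)) e hbound
  obtain ⟨J, seq, h0, hsteps, hJ⟩ := hpath.exists_seq
  refine ⟨J, seq, h0, hsteps, hJ ▸ hd e' ((hU0 e').mp hU') ?_⟩
  exact lt_trans (lt_of_le_of_lt (by exact_mod_cast hw') hbound) hαd

/-- Generic iterative potential-based decoding lemma: if a decoder can always strictly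
decrease the potential of a nonzero error of weight `< αd` by flipping at most `c` bits,
then any error of weight `< αd/(1+sc)` is corrected up to stabilizer. -/
theorem iterative_decoder_correctness (n d : ℕ) (α s : ℝ) (c : ℕ)
    (CX CZ : Submodule (ZMod 2) (Fin n → ZMod 2))
    (hcss : dualCode CZ ≤ CX)
    (hα : α < 1) (hs : 0 < s) (hc : 0 < c)
    (U : (Fin n → ZMod 2) → ℕ)
    (hUcoset : ∀ e x, x ∈ CX → U (e + x) = U e)
    (hU0 : ∀ e, U e = 0 ↔ e ∈ CX)
    (hUs : ∀ e, (U e : ℝ) ≤ s * hw e)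
    (hd : ∀ x ∈ CX, (hw x : ℝ) < d → x ∈ dualCode CZ)
    (hstep : ∀ e, e ∉ CX → (hw e : ℝ) < α * d →
      ∃ z, hw z ≤ c ∧ U (e + z) < U e)
    (e : Fin n → ZMod 2) (he : (hw e : ℝ) < α * d / (1 + s * c)) :
    ∃ (J : ℕ) (seq : ℕ → (Fin n → ZMod 2)),
      seq 0 = e ∧
      (∀ i < J, hw (seq (i + 1) - seq i) ≤ c ∧ U (seq (i + 1)) < U (seq i)) ∧
      seq J ∈ dualCode CZ :=
  iterative_decoder_correctness_general n d α s c CX CZ hα hs U hU0 hUs hd hstep e he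
end
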